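/- Let (G,φ) be a finitely generated flow in the category of groups, i.e. G is a group, φ : G → G an endomorphism, and G is generated by ⋃_{n≥0} φ^n(F_0) for some nonempty finite subset F_0 of G. Then h_alg(φ) > 0 if and only if (G,φ) has exponential growth, i.e. there exist a nonempty finite subset F of G, a real b > 1, and n_0 such that γ_{φ,F}(n) ≥ b^n for all n ≥ n_0. Consequently, if (G,φ) has polynomial growth (for every nonempty finite F there exist d ∈ ℕ and C > 0 with γ_{φ,F}(n) ≤ C·n^d for all n ≥ 1), then h_alg(φ) = 0. -/
import Mathlib


open scoped Pointwise ENNReal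

/-- The `n`-th trajectory of a finite subset `F` under `φ`
(`Tn φ F n = T_{n+1}(φ,F) = F·φ(F)·…·φⁿ(F)`, a pointwise product of finsets). -/
noncomputable def Tn {G : Type*} [Group G] (φ : G → G) (F : Finset G) : ℕ → Finset G
  | 0 => F
  | n + 1 =>
      letI := Classical.decEq G
      Tn φ F n * F.image φ^[n + 1]

/-- `H_alg(φ,F) = lim_n (log |T_n(φ,F)|)/n` (the limit exists, and equals the `limsup`). -/
noncomputable def Halg {G : Type*} [Group G] (φ : G → G) (F : Finset G) : ℝ :=
  Filter.limsup (fun n : ℕ => Real.log (Tn φ F n).card / ((n : ℝ) + 1)) Filter.atTop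

/-- The algebraic entropy `h_alg(φ) = sup {H_alg(φ,F) : F nonempty finite} ∈ [0,∞]`. -/
noncomputable def halg {G : Type*} [Group G] (φ : G → G) : ℝ≥0∞ :=
  ⨆ F : Finset G, ⨆ _ : F.Nonempty, ENNReal.ofReal (Halg φ F)

section Aux

variable {G : Type*} [Group G] (φ : G → G) (F : Finset G)

lemma Tn_nonempty (hF : F.Nonempty) : ∀ n, (Tn φ F n).Nonempty
  | 0 => hF
  | n + 1 => by
      letI := Classical.decEq G
      exact (Tn_nonempty hF n).mul (hF.image _)

lemma iter_mul (hφ : ∀ x y : G, φ (x * y) = φ x * φ y) :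
    ∀ (k : ℕ) (x y : G), φ^[k] (x * y) = φ^[k] x * φ^[k] y := by
  intro k
  induction k with
  | zero => simp
  | succ k ih =>
      intro x y
      simp only [Function.iterate_succ_apply']
      rw [ih, hφ]

lemma image_mul' (hφ : ∀ x y : G, φ (x * y) = φ x * φ y) (k : ℕ) (s t : Finset G) :
    letI := Classical.decEq G
    (s * t).image φ^[k] = s.image φ^[k] * t.image φ^[k] := by
  letI := Classical.decEq G
  ext z
  simp only [Finset.mem_image, Finset.mem_mul]
  constructor
  · rintro ⟨w, ⟨a, ha, b, hb, rfl⟩, rfl⟩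
    exact ⟨_, ⟨a, ha, rfl⟩, _, ⟨b, hb, rfl⟩, (iter_mul φ hφ k a b).symm⟩
  · rintro ⟨x, ⟨a, ha, rfl⟩, y, ⟨b, hb, rfl⟩, rfl⟩
    exact ⟨a * b, ⟨a, ha, b, hb, rfl⟩, iter_mul φ hφ k a b⟩

lemma Tn_decomp (hφ : ∀ x y : G, φ (x * y) = φ x * φ y) (n : ℕ) :
    ∀ m : ℕ, Tn φ F (n + m + 1) =
      (letI := Classical.decEq G; Tn φ F n * (Tn φ F m).image φ^[n + 1]) := by
  letI := Classical.decEq G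
  intro m
  induction m with
  | zero => rfl
  | succ m ih =>
      show Tn φ F ((n + m + 1) + 1) = _
      rw [Tn, ih]
      show _ = Tn φ F n * (Tn φ F m * F.image φ^[m+1]).image φ^[n+1]
      rw [image_mul' φ hφ, ← mul_assoc]
      congr 1
      have h2 : n + 1 + (m + 1) = n + m + 1 + 1 := by omega
      rw [Finset.image_image, ← Function.iterate_add, h2]

lemma Tn_card_submul (hφ : ∀ x y : G, φ (x * y) = φ x * φ y) (n m : ℕ) :
    (Tn φ F (n + m + 1)).card ≤ (Tn φ F n).card * (Tn φ F m).card := by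
  letI := Classical.decEq G
  rw [Tn_decomp φ F hφ n m]
  calc (Tn φ F n * (Tn φ F m).image φ^[n + 1]).card
      ≤ (Tn φ F n).card * ((Tn φ F m).image φ^[n + 1]).card := Finset.card_mul_le
    _ ≤ (Tn φ F n).card * (Tn φ F m).card :=
        Nat.mul_le_mul_left _ (Finset.card_image_le)

end Aux

open Filter Topology in
lemma halg_key {G : Type*} [Group G] (φ : G → G)
    (hφ : ∀ x y : G, φ (x * y) = φ x * φ y) (F : Finset G) (hF : F.Nonempty) :
    Filter.Tendsto (fun n : ℕ => Real.log (Tn φ F n).card / ((n : ℝ) + 1))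
      Filter.atTop (𝓝 (Halg φ F))
    ∧ ∀ n : ℕ, Halg φ F ≤ Real.log (Tn φ F n).card / ((n : ℝ) + 1) := by
  have hpos : ∀ n, 0 < ((Tn φ F n).card : ℝ) := fun n => by
    exact_mod_cast Finset.card_pos.2 (Tn_nonempty φ F hF n)
  have hone : ∀ n, (1 : ℝ) ≤ ((Tn φ F n).card : ℝ) := fun n => by
    exact_mod_cast Finset.card_pos.2 (Tn_nonempty φ F hF n)
  set u : ℕ → ℝ := fun n => Real.log ((Tn φ F (n - 1)).card) with hu
  have hlog0 : ∀ n, 0 ≤ u n := fun n => Real.log_nonneg (hone _)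
  have hsub : Subadditive u := by
    rintro (_ | m) (_ | n)
    · exact le_add_of_nonneg_left (hlog0 0)
    · rw [zero_add]; exact le_add_of_nonneg_left (hlog0 0)
    · exact le_add_of_nonneg_right (hlog0 0)
    · show Real.log ((Tn φ F (m + 1 + (n + 1) - 1)).card) ≤
        Real.log ((Tn φ F m).card) + Real.log ((Tn φ F n).card)
      have h1 : m + 1 + (n + 1) - 1 = m + n + 1 := by omega
      rw [h1, ← Real.log_mul (ne_of_gt (hpos m)) (ne_of_gt (hpos n))]
      apply Real.log_le_log (hpos _)
      exact_mod_cast Tn_card_submul φ F hφ m n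
  have hbdd : BddBelow (Set.range fun n : ℕ => u n / n) := by
    refine ⟨0, ?_⟩
    rintro x ⟨n, rfl⟩
    exact div_nonneg (hlog0 n) (Nat.cast_nonneg n)
  have htend := hsub.tendsto_lim hbdd
  have hcomp : Tendsto (fun n : ℕ => Real.log (Tn φ F n).card / ((n : ℝ) + 1))
      atTop (𝓝 hsub.lim) := by
    have h2 := htend.comp (tendsto_add_atTop_nat 1)
    have h3 : ((fun n : ℕ => u n / n) ∘ fun n => n + 1) =
        fun n : ℕ => Real.log (Tn φ F n).card / ((n : ℝ) + 1) := by
      funext n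
      simp only [Function.comp]
      push_cast
      rfl
    rwa [h3] at h2
  have hH : Halg φ F = hsub.lim := hcomp.limsup_eq
  rw [hH]
  refine ⟨hcomp, fun n => ?_⟩
  have := hsub.lim_le_div hbdd (n := n + 1) (Nat.succ_ne_zero n)
  have hc : ((n + 1 : ℕ) : ℝ) = (n : ℝ) + 1 := by push_cast; ring
  rwa [hc] at this

open Filter Topology

/-- Let `(G,φ)` be a finitely generated flow in the category of groups.
Then `h_alg(φ) > 0` if and only if `(G,φ)` has exponential growth; consequently, if
`(G,φ)` has polynomial growth then `h_alg(φ) = 0`. -/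
theorem statement_18 {G : Type*} [Group G] (φ : G → G)
    (hφ : ∀ x y : G, φ (x * y) = φ x * φ y)
    (F₀ : Finset G) (hF₀ : F₀.Nonempty)
    (hgen : Subgroup.closure (⋃ k : ℕ, φ^[k] '' (F₀ : Set G)) = ⊤) :
    (0 < halg φ ↔
      ∃ F : Finset G, F.Nonempty ∧ ∃ b : ℝ, 1 < b ∧ ∃ n₀ : ℕ, ∀ n : ℕ, n₀ ≤ n →
        b ^ (n + 1) ≤ ((Tn φ F n).card : ℝ))
    ∧ ((∀ F : Finset G, F.Nonempty → ∃ d : ℕ, ∃ C : ℝ, 0 < C ∧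
          ∀ n : ℕ, ((Tn φ F n).card : ℝ) ≤ C * ((n : ℝ) + 1) ^ d) →
        halg φ = 0) := by
  have hpos : ∀ (F : Finset G), F.Nonempty → ∀ n, 0 < ((Tn φ F n).card : ℝ) :=
    fun F hF n => by exact_mod_cast Finset.card_pos.2 (Tn_nonempty φ F hF n)
  constructor
  · constructor
    · -- exponential growth from positive entropy
      intro h
      rw [halg, lt_iSup_iff] at h
      obtain ⟨F, hF⟩ := h
      rw [lt_iSup_iff] at hF
      obtain ⟨hF, hpos'⟩ := hF
      have hL : 0 < Halg φ F := ENNReal.ofReal_pos.mp hpos'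
      obtain ⟨-, hle⟩ := halg_key φ hφ F hF
      refine ⟨F, hF, Real.exp (Halg φ F), Real.one_lt_exp_iff.mpr hL, 0,
        fun n _ => ?_⟩
      have h1 : Halg φ F * ((n : ℝ) + 1) ≤ Real.log ((Tn φ F n).card) := by
        have h2 := hle n
        have h3 : (0 : ℝ) < (n : ℝ) + 1 := by positivity
        rw [le_div_iff₀ h3] at h2
        exact h2
      calc Real.exp (Halg φ F) ^ (n + 1)
          = Real.exp (Halg φ F * ((n : ℝ) + 1)) := by
            rw [← Real.exp_nat_mul]; congr 1; push_cast; ring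
        _ ≤ Real.exp (Real.log ((Tn φ F n).card)) := Real.exp_le_exp.mpr h1
        _ = ((Tn φ F n).card : ℝ) := Real.exp_log (hpos F hF n)
    · -- positive entropy from exponential growth
      rintro ⟨F, hF, b, hb, n₀, hn⟩
      obtain ⟨htend, -⟩ := halg_key φ hφ F hF
      have hLb : Real.log b ≤ Halg φ F := by
        refine ge_of_tendsto htend ?_
        filter_upwards [eventually_ge_atTop n₀] with n hn'
        have h3 : (0 : ℝ) < (n : ℝ) + 1 := by positivity
        rw [le_div_iff₀ h3]
        calc Real.log b * ((n : ℝ) + 1) = Real.log (b ^ (n + 1)) := by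
              rw [Real.log_pow]; push_cast; ring
          _ ≤ Real.log ((Tn φ F n).card) :=
              Real.log_le_log (pow_pos (lt_trans one_pos hb) _) (hn n hn')
      have hHpos : 0 < Halg φ F := lt_of_lt_of_le (Real.log_pos hb) hLb
      calc (0 : ℝ≥0∞) < ENNReal.ofReal (Halg φ F) := ENNReal.ofReal_pos.mpr hHpos
        _ ≤ halg φ := le_iSup_of_le F (le_iSup_of_le hF le_rfl)
  · -- polynomial growth implies zero entropy
    intro hpoly
    rw [halg, ENNReal.iSup_eq_zero]
    intro F
    rw [ENNReal.iSup_eq_zero]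
    intro hF
    rw [ENNReal.ofReal_eq_zero]
    obtain ⟨d, C, hC, hCB⟩ := hpoly F hF
    obtain ⟨htend, -⟩ := halg_key φ hφ F hF
    -- bounding sequence
    have h1 : Tendsto (fun n : ℕ => (n : ℝ) + 1) atTop atTop :=
      tendsto_atTop_add_const_right atTop 1 tendsto_natCast_atTop_atTop
    have hlogx : Tendsto (fun x : ℝ => Real.log x / x) atTop (𝓝 0) := by
      have := Real.tendsto_pow_log_div_mul_add_atTop 1 0 1 one_ne_zero
      simpa using this
    have h2 : Tendsto (fun n : ℕ => Real.log ((n : ℝ) + 1) / ((n : ℝ) + 1)) atTop (𝓝 0) :=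
      hlogx.comp h1
    have h3 : Tendsto (fun n : ℕ => Real.log C / ((n : ℝ) + 1)) atTop (𝓝 0) :=
      tendsto_const_nhds.div_atTop h1
    have hg : Tendsto (fun n : ℕ =>
        Real.log C / ((n : ℝ) + 1) + (d : ℝ) * (Real.log ((n : ℝ) + 1) / ((n : ℝ) + 1)))
        atTop (𝓝 0) := by
      have := h3.add (h2.const_mul (d : ℝ))
      simpa using this
    refine le_of_tendsto_of_tendsto' htend hg fun n => ?_
    have h4 : (0 : ℝ) < (n : ℝ) + 1 := by positivity
    have h5 : Real.log ((Tn φ F n).card) ≤ Real.log C + (d : ℝ) * Real.log ((n : ℝ) + 1) := by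
      calc Real.log ((Tn φ F n).card) ≤ Real.log (C * ((n : ℝ) + 1) ^ d) :=
            Real.log_le_log (hpos F hF n) (hCB n)
        _ = Real.log C + (d : ℝ) * Real.log ((n : ℝ) + 1) := by
            rw [Real.log_mul (ne_of_gt hC) (by positivity), Real.log_pow]
    calc Real.log ((Tn φ F n).card) / ((n : ℝ) + 1)
        ≤ (Real.log C + (d : ℝ) * Real.log ((n : ℝ) + 1)) / ((n : ℝ) + 1) :=
          div_le_div_of_nonneg_right h5 h4.le |>.trans_eq rfl
      _ = Real.log C / ((n : ℝ) + 1) + (d : ℝ) * (Real.log ((n : ℝ) + 1) / ((n : ℝ) + 1)) := by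
          ring
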